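/- arXiv:2305.06172 — 7 statements merged into one kernel-verified Lean document; each statement's English description precedes it below -/
import Mathlib

section
/- Optimality of the conditional-expectation profile: under the assumptions of the Pythagorean identity with α ∈ (0,1), for every integrable nonnegative ℓ̃_r one has D_α(π ‖ π̃_r) ≥ D_α(π ‖ π_r^opt), with equality if and only if π̃_r = π_r^opt as measures. -/
open MeasureTheory Filter

/-!
For a `σ(φ_r)`-measurable density `g`, the pull-out property of conditional expectation replaces
`ℓ ^ α` by `E[ℓ ^ α | φ_r] = (ℓ_r^opt ∘ φ_r) ^ α` in `∫ ℓ ^ α g ^ (1 - α)`, so that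
`D_α(π ‖ g) = (Z_r / Z_π) ^ α H - 1` up to the negative factor `1 / (α (α - 1))`, where
`H = ∫ p ^ α g ^ (1 - α)` is the affinity between `g` and the density `p` of `π_r^opt`.
Integrating the weighted AM-GM inequality `p ^ α g ^ (1 - α) ≤ α p + (1 - α) g` gives `H ≤ 1`,
with equality iff `g = p` a.e.

The density of `π̃_r` qualifies: although `ℓ̃_r` need not be measurable, `ℓ̃_r ∘ φ_r` agrees
a.e. with a `σ(φ_r)`-measurable function. Integrability of `ℓ_r^opt ∘ φ_r` comes from
conditional Jensen, `E[ℓ ^ α | φ_r] ≤ E[ℓ | φ_r] ^ α`.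
-/

lemma Real.div_rpow_mul_self {a c α : ℝ} (ha : 0 ≤ a) (hc : 0 ≤ c) (hα : α ≠ 1) :
    (a / c) ^ α * c = a ^ α * c ^ (1 - α) := by
  rw [Real.div_rpow ha hc, Real.rpow_one_sub' hc (sub_ne_zero.2 hα.symm)]
  ring

section Affinity

variable {X : Type*} [MeasurableSpace X] {μ : Measure X} {f g : X → ℝ} {α : ℝ}

structure IsProbabilityDensity (μ : Measure X) (f : X → ℝ) : Prop where
  integrable : Integrable f μ
  nonneg : 0 ≤ᵐ[μ] f
  integral_eq_one : ∫ x, f x ∂μ = 1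

lemma IsProbabilityDensity.div_integral (hf : Integrable f μ) (hf0 : 0 ≤ᵐ[μ] f)
    (hpos : 0 < ∫ x, f x ∂μ) : IsProbabilityDensity μ fun x => f x / ∫ y, f y ∂μ where
  integrable := hf.div_const _
  nonneg := by filter_upwards [hf0] with x hx using div_nonneg hx hpos.le
  integral_eq_one := by rw [integral_div, div_self hpos.ne']

lemma MeasureTheory.Integrable.rpow_mul_rpow_one_sub (hf : Integrable f μ)
    (hg : Integrable g μ) (hf0 : 0 ≤ᵐ[μ] f) (hg0 : 0 ≤ᵐ[μ] g) (hα0 : 0 ≤ α) (hα1 : α ≤ 1) :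
    Integrable (fun x => f x ^ α * g x ^ (1 - α)) μ := by
  refine ((hf.const_mul α).add (hg.const_mul (1 - α))).mono'
    ((hf.aemeasurable.pow_const α).mul (hg.aemeasurable.pow_const _)).aestronglyMeasurable ?_
  filter_upwards [hf0, hg0] with x hfx hgx
  rw [Real.norm_of_nonneg (mul_nonneg (Real.rpow_nonneg hfx _) (Real.rpow_nonneg hgx _))]
  exact Real.geom_mean_le_arith_mean2_weighted hα0 (sub_nonneg.2 hα1) hfx hgx (by ring)

lemma MeasureTheory.Integrable.rpow_of_le_one [IsFiniteMeasure μ] (hf : Integrable f μ)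
    (hf0 : 0 ≤ᵐ[μ] f) (hα0 : 0 ≤ α) (hα1 : α ≤ 1) : Integrable (fun x => f x ^ α) μ := by
  simpa using hf.rpow_mul_rpow_one_sub (integrable_const 1) hf0
    (ae_of_all _ fun _ => zero_le_one) hα0 hα1

lemma integral_young_deficit (hf : IsProbabilityDensity μ f) (hg : IsProbabilityDensity μ g)
    (hα0 : 0 ≤ α) (hα1 : α ≤ 1) :
    ∫ x, (α * f x + (1 - α) * g x - f x ^ α * g x ^ (1 - α)) ∂μ
      = 1 - ∫ x, f x ^ α * g x ^ (1 - α) ∂μ := by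
  have hmean : Integrable (fun x => α * f x + (1 - α) * g x) μ :=
    (hf.integrable.const_mul α).add (hg.integrable.const_mul (1 - α))
  rw [integral_sub hmean (hf.integrable.rpow_mul_rpow_one_sub hg.integrable hf.nonneg hg.nonneg
      hα0 hα1), integral_add (hf.integrable.const_mul α) (hg.integrable.const_mul (1 - α)),
    integral_const_mul, integral_const_mul, hf.integral_eq_one, hg.integral_eq_one]
  ring

lemma integral_rpow_mul_rpow_one_sub_le_one (hf : IsProbabilityDensity μ f)
    (hg : IsProbabilityDensity μ g) (hα0 : 0 ≤ α) (hα1 : α ≤ 1) :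
    ∫ x, f x ^ α * g x ^ (1 - α) ∂μ ≤ 1 := by
  have hdeficit := integral_nonneg_of_ae (μ := μ)
    (f := fun x => α * f x + (1 - α) * g x - f x ^ α * g x ^ (1 - α)) <| by
    filter_upwards [hf.nonneg, hg.nonneg] with x hfx hgx
    exact sub_nonneg.2 (Real.geom_mean_le_arith_mean2_weighted hα0 (sub_nonneg.2 hα1) hfx hgx
      (by ring))
  rw [integral_young_deficit hf hg hα0 hα1] at hdeficit
  linarith

lemma integral_rpow_mul_rpow_one_sub_eq_one_iff (hf : IsProbabilityDensity μ f)
    (hg : IsProbabilityDensity μ g) (hα0 : 0 < α) (hα1 : α < 1) :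
    ∫ x, f x ^ α * g x ^ (1 - α) ∂μ = 1 ↔ f =ᵐ[μ] g := by
  have hyoung : ∀ᵐ x ∂μ, f x ^ α * g x ^ (1 - α) ≤ α * f x + (1 - α) * g x ∧
      (f x ^ α * g x ^ (1 - α) = α * f x + (1 - α) * g x ↔ f x = g x) := by
    filter_upwards [hf.nonneg, hg.nonneg] with x hfx hgx
    exact ⟨Real.geom_mean_le_arith_mean2_weighted hα0.le (sub_nonneg.2 hα1.le) hfx hgx (by ring),
      Real.geom_mean_eq_arith_mean2_weighted_iff_of_pos hα0 (sub_pos.2 hα1) hfx hgx (by ring)⟩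
  have hdeficit_int : Integrable
      (fun x => α * f x + (1 - α) * g x - f x ^ α * g x ^ (1 - α)) μ :=
    ((hf.integrable.const_mul α).add (hg.integrable.const_mul (1 - α))).sub
      (hf.integrable.rpow_mul_rpow_one_sub hg.integrable hf.nonneg hg.nonneg hα0.le hα1.le)
  have hdeficit_nonneg :
      0 ≤ᵐ[μ] fun x => α * f x + (1 - α) * g x - f x ^ α * g x ^ (1 - α) := by
    filter_upwards [hyoung] with x hx
    exact sub_nonneg.2 hx.1
  rw [eq_comm, ← sub_eq_zero, ← integral_young_deficit hf hg hα0.le hα1.le,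
    integral_eq_zero_iff_of_nonneg_ae hdeficit_nonneg hdeficit_int]
  refine eventually_congr ?_
  filter_upwards [hyoung] with x hx
  rw [Pi.zero_apply, sub_eq_zero, eq_comm, hx.2]

lemma withDensity_ofReal_eq_withDensity_ofReal_iff (hf : Integrable f μ) (hg : AEMeasurable g μ)
    (hf0 : 0 ≤ᵐ[μ] f) (hg0 : 0 ≤ᵐ[μ] g) :
    μ.withDensity (fun x => ENNReal.ofReal (f x)) = μ.withDensity (fun x => ENNReal.ofReal (g x))
      ↔ f =ᵐ[μ] g := by
  rw [withDensity_eq_iff hf.aemeasurable.ennreal_ofReal hg.ennreal_ofReal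
    ((lintegral_ofReal_ne_top_iff_integrable hf.aestronglyMeasurable hf0).2 hf)]
  refine eventually_congr ?_
  filter_upwards [hf0, hg0] with x hfx hgx
  exact ENNReal.ofReal_eq_ofReal_iff hfx hgx

end Affinity

section CondExp

variable {X : Type*} {m m0 : MeasurableSpace X} {μ : Measure X} {f g : X → ℝ} {α : ℝ}

lemma integral_mul_condExp (hm : m ≤ m0) [SigmaFinite (μ.trim hm)]
    (hg : AEStronglyMeasurable[m] g μ) (hf : Integrable f μ)
    (hgf : Integrable (fun x => g x * f x) μ) :
    ∫ x, g x * (μ[f|m]) x ∂μ = ∫ x, g x * f x ∂μ :=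
  calc ∫ x, g x * (μ[f|m]) x ∂μ = ∫ x, (μ[g * f|m]) x ∂μ :=
        integral_congr_ae (condExp_mul_of_aestronglyMeasurable_left hg hgf hf).symm
    _ = ∫ x, g x * f x ∂μ := integral_condExp hm

lemma condExp_rpow_le_rpow_condExp (hm : m ≤ m0) [SigmaFinite (μ.trim hm)]
    (hα0 : 0 ≤ α) (hα1 : α ≤ 1) (hf : Integrable f μ) (hf0 : 0 ≤ᵐ[μ] f)
    (hfα : Integrable (fun x => f x ^ α) μ) :
    μ[fun x => f x ^ α|m] ≤ᵐ[μ] fun x => (μ[f|m]) x ^ α :=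
  (Real.concaveOn_rpow hα0 hα1).condExp_map_le hm
    (Real.continuous_rpow_const hα0).continuousOn.upperSemicontinuousOn hf0 isClosed_Ici hf hfα

/-- For `m = σ(φ_r)` and `f = ℓ` this is the optimal profile `ℓ_r^opt ∘ φ_r`. -/
noncomputable def condPowerMean (m : MeasurableSpace X) {m0 : MeasurableSpace X}
    (μ : Measure[m0] X) (α : ℝ) (f : X → ℝ) : X → ℝ :=
  fun x => (μ[fun y => f y ^ α|m]) x ^ (1 / α)

lemma stronglyMeasurable_condPowerMean (hα : 0 < α) :
    StronglyMeasurable[m] (condPowerMean m μ α f) :=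
  (Real.continuous_rpow_const (by positivity)).comp_stronglyMeasurable stronglyMeasurable_condExp

lemma condPowerMean_nonneg (hf0 : 0 ≤ᵐ[μ] f) : 0 ≤ᵐ[μ] condPowerMean m μ α f := by
  filter_upwards [condExp_nonneg (m := m) (f := fun y => f y ^ α)
    (by filter_upwards [hf0] with x hx using Real.rpow_nonneg hx α)] with x hx
  exact Real.rpow_nonneg hx _

lemma condPowerMean_rpow (hα : α ≠ 0) (hf0 : 0 ≤ᵐ[μ] f) :
    (fun x => condPowerMean m μ α f x ^ α) =ᵐ[μ] μ[fun y => f y ^ α|m] := by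
  filter_upwards [condExp_nonneg (m := m) (f := fun y => f y ^ α)
    (by filter_upwards [hf0] with x hx using Real.rpow_nonneg hx α)] with x hx
  rw [condPowerMean, ← Real.rpow_mul hx, one_div_mul_cancel hα, Real.rpow_one]

lemma condPowerMean_le_condExp (hm : m ≤ m0) [SigmaFinite (μ.trim hm)] (hα0 : 0 < α)
    (hα1 : α ≤ 1) (hf : Integrable f μ) (hf0 : 0 ≤ᵐ[μ] f)
    (hfα : Integrable (fun x => f x ^ α) μ) :
    condPowerMean m μ α f ≤ᵐ[μ] μ[f|m] := by
  filter_upwards [condExp_rpow_le_rpow_condExp hm hα0.le hα1 hf hf0 hfα,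
    condExp_nonneg (m := m) (f := fun y => f y ^ α)
      (by filter_upwards [hf0] with x hx using Real.rpow_nonneg hx α),
    condExp_nonneg (m := m) hf0] with x hjensen hfα0 hf0'
  calc condPowerMean m μ α f x ≤ ((μ[f|m]) x ^ α) ^ (1 / α) :=
        Real.rpow_le_rpow hfα0 hjensen (by positivity)
    _ = (μ[f|m]) x := by rw [← Real.rpow_mul hf0', mul_one_div_cancel hα0.ne', Real.rpow_one]

lemma integrable_condPowerMean (hm : m ≤ m0) [SigmaFinite (μ.trim hm)] (hα0 : 0 < α)
    (hα1 : α ≤ 1) (hf : Integrable f μ) (hf0 : 0 ≤ᵐ[μ] f)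
    (hfα : Integrable (fun x => f x ^ α) μ) :
    Integrable (condPowerMean m μ α f) μ := by
  refine (integrable_condExp (m := m) (f := f)).mono'
    ((stronglyMeasurable_condPowerMean hα0).mono hm).aestronglyMeasurable ?_
  filter_upwards [condPowerMean_nonneg hf0, condPowerMean_le_condExp hm hα0 hα1 hf hf0 hfα]
    with x hx0 hx
  rwa [Real.norm_of_nonneg hx0]

lemma integral_condPowerMean_pos (hm : m ≤ m0) [SigmaFinite (μ.trim hm)] (hα0 : 0 < α)
    (hα1 : α ≤ 1) (hf : Integrable f μ) (hf0 : 0 ≤ᵐ[μ] f)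
    (hfα : Integrable (fun x => f x ^ α) μ) (hpos : 0 < ∫ x, f x ^ α ∂μ) :
    0 < ∫ x, condPowerMean m μ α f x ∂μ := by
  refine (integral_nonneg_of_ae (condPowerMean_nonneg hf0)).lt_of_ne fun hzero => hpos.ne' ?_
  have hM0 := (integral_eq_zero_iff_of_nonneg_ae (condPowerMean_nonneg hf0)
    (integrable_condPowerMean hm hα0 hα1 hf hf0 hfα)).1 hzero.symm
  rw [← integral_condExp hm]
  refine integral_eq_zero_of_ae ?_
  filter_upwards [condPowerMean_rpow hα0.ne' hf0, hM0] with x hx hx0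
  rw [← hx, hx0, Pi.zero_apply, Real.zero_rpow hα0.ne']

lemma integral_rpow_mul_eq_integral_condPowerMean_rpow_mul (hm : m ≤ m0)
    [SigmaFinite (μ.trim hm)] (hα : α ≠ 0) (hf0 : 0 ≤ᵐ[μ] f)
    (hfα : Integrable (fun x => f x ^ α) μ) (hg : AEStronglyMeasurable[m] g μ)
    (hfg : Integrable (fun x => f x ^ α * g x) μ) :
    ∫ x, f x ^ α * g x ∂μ = ∫ x, condPowerMean m μ α f x ^ α * g x ∂μ := by
  calc ∫ x, f x ^ α * g x ∂μ = ∫ x, g x * (μ[fun y => f y ^ α|m]) x ∂μ := by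
        rw [integral_mul_condExp hm hg hfα (by simpa only [mul_comm] using hfg)]
        simp only [mul_comm]
    _ = ∫ x, condPowerMean m μ α f x ^ α * g x ∂μ := by
        refine integral_congr_ae ?_
        filter_upwards [condPowerMean_rpow hα hf0] with x hx
        rw [hx, mul_comm]

lemma integral_div_rpow_mul_eq_condPowerMean (hm : m ≤ m0) [SigmaFinite (μ.trim hm)]
    (hα0 : 0 < α) (hα1 : α < 1) (hf : Integrable f μ) (hf0 : 0 ≤ᵐ[μ] f)
    (hfα : Integrable (fun x => f x ^ α) μ) {c : ℝ} (hc : 0 ≤ c)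
    (hM : 0 < ∫ x, condPowerMean m μ α f x ∂μ) (hg : AEStronglyMeasurable[m] g μ)
    (hg_int : Integrable g μ) (hg0 : 0 ≤ᵐ[μ] g) :
    ∫ x, (f x / c / g x) ^ α * g x ∂μ
      = ((∫ x, condPowerMean m μ α f x ∂μ) / c) ^ α
        * ∫ x, (condPowerMean m μ α f x / ∫ y, condPowerMean m μ α f y ∂μ) ^ α
          * g x ^ (1 - α) ∂μ := by
  set M := condPowerMean m μ α f
  have hgα : AEStronglyMeasurable[m] (fun x => g x ^ (1 - α)) μ :=
    (Real.continuous_rpow_const (sub_nonneg.2 hα1.le)).comp_aestronglyMeasurable hg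
  calc ∫ x, (f x / c / g x) ^ α * g x ∂μ = ∫ x, f x ^ α * g x ^ (1 - α) / c ^ α ∂μ := by
        refine integral_congr_ae ?_
        filter_upwards [hf0, hg0] with x hfx hgx
        rw [Real.div_rpow_mul_self (div_nonneg hfx hc) hgx hα1.ne, Real.div_rpow hfx hc]
        ring
    _ = ∫ x, M x ^ α * g x ^ (1 - α) / c ^ α ∂μ := by
        rw [integral_div, integral_div, integral_rpow_mul_eq_integral_condPowerMean_rpow_mul hm
          hα0.ne' hf0 hfα hgα (hf.rpow_mul_rpow_one_sub hg_int hf0 hg0 hα0.le hα1.le)]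
    _ = ((∫ x, M x ∂μ) / c) ^ α * ∫ x, (M x / ∫ y, M y ∂μ) ^ α * g x ^ (1 - α) ∂μ := by
        rw [← integral_const_mul]
        refine integral_congr_ae ?_
        filter_upwards [condPowerMean_nonneg hf0] with x hx
        rw [← mul_assoc, ← Real.mul_rpow (div_nonneg hM.le hc) (div_nonneg hx hM.le),
          div_mul_div_comm, mul_comm (∫ y, M y ∂μ), mul_div_mul_right _ _ hM.ne',
          Real.div_rpow hx hc]
        ring

lemma isProbabilityDensity_condPowerMean (hm : m ≤ m0) [SigmaFinite (μ.trim hm)] (hα0 : 0 < α)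
    (hα1 : α ≤ 1) (hf : Integrable f μ) (hf0 : 0 ≤ᵐ[μ] f)
    (hfα : Integrable (fun x => f x ^ α) μ) (hM : 0 < ∫ x, condPowerMean m μ α f x ∂μ) :
    IsProbabilityDensity μ fun x => condPowerMean m μ α f x / ∫ y, condPowerMean m μ α f y ∂μ :=
  .div_integral (integrable_condPowerMean hm hα0 hα1 hf hf0 hfα) (condPowerMean_nonneg hf0) hM

lemma integral_div_rpow_mul_condPowerMean_self (hm : m ≤ m0) [SigmaFinite (μ.trim hm)]
    (hα0 : 0 < α) (hα1 : α < 1) (hf : Integrable f μ) (hf0 : 0 ≤ᵐ[μ] f)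
    (hfα : Integrable (fun x => f x ^ α) μ) {c : ℝ} (hc : 0 ≤ c)
    (hM : 0 < ∫ x, condPowerMean m μ α f x ∂μ) :
    ∫ x, (f x / c / (condPowerMean m μ α f x / ∫ y, condPowerMean m μ α f y ∂μ)) ^ α
        * (condPowerMean m μ α f x / ∫ y, condPowerMean m μ α f y ∂μ) ∂μ
      = ((∫ x, condPowerMean m μ α f x ∂μ) / c) ^ α := by
  have hP := isProbabilityDensity_condPowerMean hm hα0 hα1.le hf hf0 hfα hM
  have hP_m : AEStronglyMeasurable[m]
      (fun x => condPowerMean m μ α f x / ∫ y, condPowerMean m μ α f y ∂μ) μ :=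
    (continuous_id.div_const _).comp_aestronglyMeasurable
      (stronglyMeasurable_condPowerMean hα0).aestronglyMeasurable
  rw [integral_div_rpow_mul_eq_condPowerMean hm hα0 hα1 hf hf0 hfα hc hM hP_m hP.integrable
    hP.nonneg, (integral_rpow_mul_rpow_one_sub_eq_one_iff hP hP hα0 hα1).2 EventuallyEq.rfl,
    mul_one]

lemma integral_div_rpow_mul_le_condPowerMean (hm : m ≤ m0) [SigmaFinite (μ.trim hm)]
    (hα0 : 0 < α) (hα1 : α < 1) (hf : Integrable f μ) (hf0 : 0 ≤ᵐ[μ] f)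
    (hfα : Integrable (fun x => f x ^ α) μ) {c : ℝ} (hc : 0 ≤ c)
    (hM : 0 < ∫ x, condPowerMean m μ α f x ∂μ) (hg_m : AEStronglyMeasurable[m] g μ)
    (hg : IsProbabilityDensity μ g) :
    ∫ x, (f x / c / g x) ^ α * g x ∂μ
      ≤ ∫ x, (f x / c / (condPowerMean m μ α f x / ∫ y, condPowerMean m μ α f y ∂μ)) ^ α
        * (condPowerMean m μ α f x / ∫ y, condPowerMean m μ α f y ∂μ) ∂μ := by
  rw [integral_div_rpow_mul_eq_condPowerMean hm hα0 hα1 hf hf0 hfα hc hM hg_m hg.integrable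
    hg.nonneg, integral_div_rpow_mul_condPowerMean_self hm hα0 hα1 hf hf0 hfα hc hM]
  exact mul_le_of_le_one_right (by positivity) (integral_rpow_mul_rpow_one_sub_le_one
    (isProbabilityDensity_condPowerMean hm hα0 hα1.le hf hf0 hfα hM) hg hα0.le hα1.le)

lemma integral_div_rpow_mul_eq_condPowerMean_iff (hm : m ≤ m0) [SigmaFinite (μ.trim hm)]
    (hα0 : 0 < α) (hα1 : α < 1) (hf : Integrable f μ) (hf0 : 0 ≤ᵐ[μ] f)
    (hfα : Integrable (fun x => f x ^ α) μ) {c : ℝ} (hc : 0 < c)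
    (hM : 0 < ∫ x, condPowerMean m μ α f x ∂μ) (hg_m : AEStronglyMeasurable[m] g μ)
    (hg : IsProbabilityDensity μ g) :
    ∫ x, (f x / c / g x) ^ α * g x ∂μ
        = ∫ x, (f x / c / (condPowerMean m μ α f x / ∫ y, condPowerMean m μ α f y ∂μ)) ^ α
          * (condPowerMean m μ α f x / ∫ y, condPowerMean m μ α f y ∂μ) ∂μ
      ↔ g =ᵐ[μ] fun x => condPowerMean m μ α f x / ∫ y, condPowerMean m μ α f y ∂μ := by
  rw [integral_div_rpow_mul_eq_condPowerMean hm hα0 hα1 hf hf0 hfα hc.le hM hg_m hg.integrable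
    hg.nonneg, integral_div_rpow_mul_condPowerMean_self hm hα0 hα1 hf hf0 hfα hc.le hM,
    mul_eq_left₀ (by positivity), integral_rpow_mul_rpow_one_sub_eq_one_iff
    (isProbabilityDensity_condPowerMean hm hα0 hα1.le hf hf0 hfα hM) hg hα0 hα1]
  exact ⟨EventuallyEq.symm, EventuallyEq.symm⟩

end CondExp

section Factorization

variable {X Y E : Type*} [MeasurableSpace X] [StandardBorelSpace X] [Nonempty X]
  [MeasurableSpace Y] [MeasurableEq Y] [NormedAddCommGroup E] [NormedSpace ℝ E] [CompleteSpace E]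
  {μ : Measure X} [IsFiniteMeasure μ] {φ : X → Y} {g : Y → E}

/-- Disintegrating the law of `(φ, id)` along `φ` recovers `g` as the fibrewise average of a
measurable version of `g ∘ φ`. -/
lemma MeasureTheory.AEStronglyMeasurable.of_comp_map (hφ : Measurable φ)
    (hg : AEStronglyMeasurable (g ∘ φ) μ) : AEStronglyMeasurable g (μ.map φ) := by
  set ρ := μ.map fun x => (φ x, x)
  have hgraph : Measurable fun x => (φ x, x) := hφ.prodMk measurable_id
  have hsnd : Measure.QuasiMeasurePreserving Prod.snd ρ μ :=
    MeasurePreserving.quasiMeasurePreserving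
      ⟨measurable_snd, (Measure.snd_map_prodMk hφ).trans Measure.map_id⟩
  have hfst : ∀ᵐ p ∂ρ, φ p.2 = p.1 :=
    (ae_map_iff hgraph.aemeasurable (measurableSet_eq_fun (hφ.comp measurable_snd)
      measurable_fst)).2 (ae_of_all _ fun _ => rfl)
  have hρ : ∀ᵐ p ∂ρ, g p.1 = hg.mk _ p.2 := by
    filter_upwards [hsnd.ae_eq hg.ae_eq_mk, hfst] with p hp hp1
    exact hp1 ▸ hp
  have hfibre : ∀ᵐ y ∂ρ.fst, ∀ᵐ x ∂ρ.condKernel y, g y = hg.mk _ x :=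
    Measure.ae_ae_of_ae_compProd (by rwa [ρ.disintegrate ρ.condKernel])
  have hρfst : ρ.fst = μ.map φ := Measure.fst_map_prodMk measurable_id
  rw [← hρfst]
  refine (AEStronglyMeasurable.integral_condKernel (f := fun p : Y × X => hg.mk _ p.2)
    (hg.stronglyMeasurable_mk.comp_measurable measurable_snd).aestronglyMeasurable).congr ?_
  filter_upwards [hfibre] with y hy
  rw [integral_congr_ae (hy.mono fun _ hx => hx.symm), integral_const, probReal_univ, one_smul]

lemma MeasureTheory.AEStronglyMeasurable.comp_comap (hφ : Measurable φ)
    (hg : AEStronglyMeasurable (g ∘ φ) μ) :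
    AEStronglyMeasurable[MeasurableSpace.comap φ ‹_›] (g ∘ φ) μ :=
  have hgφ := hg.of_comp_map hφ
  ⟨hgφ.mk g ∘ φ, hgφ.stronglyMeasurable_mk.comp_measurable (comap_measurable φ),
    ae_of_ae_map hφ.aemeasurable hgφ.ae_eq_mk⟩

end Factorization

theorem optimal_profile_optimality_general
    {d r : ℕ} (μ : Measure (Fin d → ℝ)) [IsProbabilityMeasure μ]
    (ℓ : (Fin d → ℝ) → ℝ) (φr : (Fin d → ℝ) → (Fin r → ℝ)) (hφ : Measurable φr)
    (hℓ_int : Integrable ℓ μ) (hℓ_pos : ∀ x, 0 < ℓ x)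
    (α : ℝ) (hα : α ∈ Set.Ioo (0:ℝ) 1)
    (Zπ : ℝ) (hZπ_pos : 0 < Zπ)
    (m : MeasurableSpace (Fin d → ℝ))
    (hm : m = MeasurableSpace.comap φr inferInstance)
    (Lopt : (Fin d → ℝ) → ℝ)
    (hLopt : Lopt = fun x => (condExp m μ (fun y => ℓ y ^ α) x) ^ (1/α))
    (Zr : ℝ) (hZr : Zr = ∫ x, Lopt x ∂μ)
    (ℓt : (Fin r → ℝ) → ℝ) (hℓt_int : Integrable (fun x => ℓt (φr x)) μ)
    (hℓt_pos : ∀ θ, 0 < ℓt θ)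
    (Zt : ℝ) (hZt : Zt = ∫ x, ℓt (φr x) ∂μ) (hZt_pos : 0 < Zt)
    (D : ((Fin d → ℝ) → ℝ) → ((Fin d → ℝ) → ℝ) → ℝ)
    (hD : D = fun p q => (1 / (α * (α - 1))) * ((∫ x, (p x / q x) ^ α * q x ∂μ) - 1)) :
    D (fun x => ℓ x / Zπ) (fun x => Lopt x / Zr)
        ≤ D (fun x => ℓ x / Zπ) (fun x => ℓt (φr x) / Zt) ∧
    (D (fun x => ℓ x / Zπ) (fun x => ℓt (φr x) / Zt)
        = D (fun x => ℓ x / Zπ) (fun x => Lopt x / Zr) ↔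
      μ.withDensity (fun x => ENNReal.ofReal (ℓt (φr x) / Zt))
        = μ.withDensity (fun x => ENNReal.ofReal (Lopt x / Zr))) := by
  obtain ⟨hα0, hα1⟩ := hα
  -- after `subst hm`, the σ-algebra `m` is no longer a local instance competing with `pi`
  subst hm hD hZr hZt
  obtain rfl : Lopt = condPowerMean (MeasurableSpace.comap φr inferInstance) μ α ℓ := hLopt
  have hℓ0 : 0 ≤ᵐ[μ] ℓ := ae_of_all _ fun x => (hℓ_pos x).le
  have hℓα := hℓ_int.rpow_of_le_one hℓ0 hα0.le hα1.le
  have hℓα_pos : 0 < ∫ x, ℓ x ^ α ∂μ :=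
    (integral_pos_iff_support_of_nonneg (fun x => (Real.rpow_pos_of_pos (hℓ_pos x) α).le)
      hℓα).2 (by simp [Function.support, (Real.rpow_pos_of_pos (hℓ_pos _) α).ne'])
  have hM_pos := integral_condPowerMean_pos hφ.comap_le hα0 hα1.le hℓ_int hℓ0 hℓα hℓα_pos
  have hq := IsProbabilityDensity.div_integral hℓt_int
    (ae_of_all _ fun x => (hℓt_pos (φr x)).le) hZt_pos
  have hq_m : AEStronglyMeasurable[MeasurableSpace.comap φr inferInstance]
      (fun x => ℓt (φr x) / ∫ y, ℓt (φr y) ∂μ) μ :=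
    (continuous_id.div_const _).comp_aestronglyMeasurable
      (hℓt_int.aestronglyMeasurable.comp_comap hφ)
  have hκ : 1 / (α * (α - 1)) < 0 := one_div_neg.2 (mul_neg_of_pos_of_neg hα0 (by linarith))
  have hP := isProbabilityDensity_condPowerMean hφ.comap_le hα0 hα1.le hℓ_int hℓ0 hℓα hM_pos
  beta_reduce
  rw [withDensity_ofReal_eq_withDensity_ofReal_iff hq.integrable hP.integrable.aemeasurable
      hq.nonneg hP.nonneg,
    ← integral_div_rpow_mul_eq_condPowerMean_iff hφ.comap_le hα0 hα1 hℓ_int hℓ0 hℓα hZπ_pos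
      hM_pos hq_m hq, mul_right_inj' hκ.ne, sub_left_inj]
  exact ⟨mul_le_mul_of_nonpos_left (sub_le_sub_right (integral_div_rpow_mul_le_condPowerMean
    hφ.comap_le hα0 hα1 hℓ_int hℓ0 hℓα hZπ_pos.le hM_pos hq_m hq) 1) hκ.le, Iff.rfl⟩

/-- Optimality of the conditional-expectation profile: for `α ∈ (0,1)`,
`D_α(π‖π̃_r) ≥ D_α(π‖π_r^opt)`, with equality iff `π̃_r = π_r^opt` as measures. -/
theorem optimal_profile_optimality
    {d r : ℕ} (μ : Measure (Fin d → ℝ)) [IsProbabilityMeasure μ]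
    (ℓ : (Fin d → ℝ) → ℝ) (φr : (Fin d → ℝ) → (Fin r → ℝ)) (hφ : Measurable φr)
    (hℓ_int : Integrable ℓ μ) (hℓ_pos : ∀ x, 0 < ℓ x)
    (α : ℝ) (hα : α ∈ Set.Ioo (0:ℝ) 1)
    (Zπ : ℝ) (hZπ : Zπ = ∫ x, ℓ x ∂μ) (hZπ_pos : 0 < Zπ)
    (m : MeasurableSpace (Fin d → ℝ))
    (hm : m = MeasurableSpace.comap φr inferInstance)
    (Lopt : (Fin d → ℝ) → ℝ)
    (hLopt : Lopt = fun x => (condExp m μ (fun y => ℓ y ^ α) x) ^ (1/α))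
    (Zr : ℝ) (hZr : Zr = ∫ x, Lopt x ∂μ)
    (ℓt : (Fin r → ℝ) → ℝ) (hℓt_int : Integrable (fun x => ℓt (φr x)) μ)
    (hℓt_pos : ∀ θ, 0 < ℓt θ)
    (Zt : ℝ) (hZt : Zt = ∫ x, ℓt (φr x) ∂μ) (hZt_pos : 0 < Zt)
    (D : ((Fin d → ℝ) → ℝ) → ((Fin d → ℝ) → ℝ) → ℝ)
    (hD : D = fun p q => (1 / (α * (α - 1))) * ((∫ x, (p x / q x) ^ α * q x ∂μ) - 1))
    (hint1 : Integrable
      (fun x => ((ℓ x / Zπ) / (ℓt (φr x) / Zt)) ^ α * (ℓt (φr x) / Zt)) μ)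
    (hint2 : Integrable
      (fun x => ((ℓ x / Zπ) / (Lopt x / Zr)) ^ α * (Lopt x / Zr)) μ) :
    D (fun x => ℓ x / Zπ) (fun x => Lopt x / Zr)
        ≤ D (fun x => ℓ x / Zπ) (fun x => ℓt (φr x) / Zt) ∧
    (D (fun x => ℓ x / Zπ) (fun x => ℓt (φr x) / Zt)
        = D (fun x => ℓ x / Zπ) (fun x => Lopt x / Zr) ↔
      μ.withDensity (fun x => ENNReal.ofReal (ℓt (φr x) / Zt))
        = μ.withDensity (fun x => ENNReal.ofReal (Lopt x / Zr))) :=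
  optimal_profile_optimality_general μ ℓ φr hφ hℓ_int hℓ_pos α hα Zπ hZπ_pos m hm Lopt hLopt Zr hZr
    ℓt hℓt_int hℓt_pos Zt hZt hZt_pos D hD
end

section
/- Closed form for the optimal divergence: with the notation of the Pythagorean identity and α ∈ (0,1), D_α(π ‖ π_r^opt) = (1/(α(α−1))) ((Z_r/Z_π)^α − 1), and moreover 0 ≤ Z_r ≤ Z_π (so the divergence is nonnegative). -/
/-!
Write `c = E[ℓ ^ α | m]`, so that `Lopt = c ^ (1 / α)`. Since `Lopt ^ (1 - α) = c ^ ((1 - α) / α)`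
is `m`-measurable, pulling it out of the conditional expectation gives
`∫ ℓ ^ α Lopt ^ (1 - α) = ∫ c ^ ((1 - α) / α) c = ∫ Lopt = Zr`.
With the normalisations `ℓ / Zπ` and `Lopt / Zr` the divergence integrand is a constant multiple of
`ℓ ^ α Lopt ^ (1 - α)`, which yields the closed form. Integrating the weighted AM-GM inequality
`ℓ ^ α Lopt ^ (1 - α) ≤ α ℓ + (1 - α) Lopt` gives `Zr ≤ α Zπ + (1 - α) Zr`, i.e. `Zr ≤ Zπ`.
-/

open MeasureTheory

section WeightedAMGM

variable {Ω : Type*} {mΩ : MeasurableSpace Ω} {μ : Measure Ω} {f g : Ω → ℝ} {α : ℝ}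

lemma integrable_rpow_mul_rpow_one_sub (hf : Integrable f μ) (hg : Integrable g μ)
    (hf₀ : 0 ≤ᵐ[μ] f) (hg₀ : 0 ≤ᵐ[μ] g) (hα₀ : 0 ≤ α) (hα₁ : α ≤ 1) :
    Integrable (fun x => f x ^ α * g x ^ (1 - α)) μ := by
  refine ((hf.const_mul α).add (hg.const_mul (1 - α))).mono'
    ((hf.aemeasurable.pow_const α).mul (hg.aemeasurable.pow_const _)).aestronglyMeasurable ?_
  filter_upwards [hf₀, hg₀] with x hfx hgx
  rw [Real.norm_of_nonneg (mul_nonneg (Real.rpow_nonneg hfx _) (Real.rpow_nonneg hgx _))]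
  exact Real.geom_mean_le_arith_mean2_weighted hα₀ (by linarith) hfx hgx (by ring)

lemma integral_rpow_mul_rpow_one_sub_le (hf : Integrable f μ) (hg : Integrable g μ)
    (hf₀ : 0 ≤ᵐ[μ] f) (hg₀ : 0 ≤ᵐ[μ] g) (hα₀ : 0 ≤ α) (hα₁ : α ≤ 1) :
    ∫ x, f x ^ α * g x ^ (1 - α) ∂μ ≤ α * ∫ x, f x ∂μ + (1 - α) * ∫ x, g x ∂μ := by
  rw [← integral_const_mul, ← integral_const_mul,
    ← integral_add (hf.const_mul α) (hg.const_mul (1 - α))]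
  refine integral_mono_ae (integrable_rpow_mul_rpow_one_sub hf hg hf₀ hg₀ hα₀ hα₁)
    ((hf.const_mul α).add (hg.const_mul (1 - α))) ?_
  filter_upwards [hf₀, hg₀] with x hfx hgx
  exact Real.geom_mean_le_arith_mean2_weighted hα₀ (by linarith) hfx hgx (by ring)

lemma MeasureTheory.Integrable.rpow_const_of_le_one [IsFiniteMeasure μ] (hf : Integrable f μ)
    (hf₀ : 0 ≤ᵐ[μ] f) (hα₀ : 0 ≤ α) (hα₁ : α ≤ 1) :
    Integrable (fun x => f x ^ α) μ := by
  simpa using integrable_rpow_mul_rpow_one_sub hf (integrable_const 1) hf₀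
    (ae_of_all _ fun _ => zero_le_one) hα₀ hα₁

end WeightedAMGM

lemma Real.rpow_add_one_of_add_one_ne_zero {x s : ℝ} (hs : s + 1 ≠ 0) :
    x ^ (s + 1) = x ^ s * x := by
  rcases eq_or_ne x 0 with rfl | hx
  · rw [Real.zero_rpow hs, mul_zero]
  · exact Real.rpow_add_one hx s

lemma integral_condExp_rpow_mul {Ω : Type*} {m m₀ : MeasurableSpace Ω} {μ : Measure[m₀] Ω}
    {h : Ω → ℝ} {s : ℝ} (hm : m ≤ m₀) [SigmaFinite (μ.trim hm)] (hh : Integrable h μ)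
    (hs : s + 1 ≠ 0) (hint : Integrable (fun x => μ[h | m] x ^ s * h x) μ) :
    ∫ x, μ[h | m] x ^ s * h x ∂μ = ∫ x, μ[h | m] x ^ (s + 1) ∂μ := by
  have hpull : μ[(fun x => μ[h | m] x ^ s) * h | m] =ᵐ[μ] (fun x => μ[h | m] x ^ s) * μ[h | m] :=
    condExp_mul_of_stronglyMeasurable_left
      (stronglyMeasurable_condExp.measurable.pow_const s).stronglyMeasurable hint hh
  calc ∫ x, μ[h | m] x ^ s * h x ∂μ
      = ∫ x, μ[(fun x => μ[h | m] x ^ s) * h | m] x ∂μ := (integral_condExp hm).symm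
    _ = ∫ x, μ[h | m] x ^ s * μ[h | m] x ∂μ := integral_congr_ae hpull
    _ = ∫ x, μ[h | m] x ^ (s + 1) ∂μ := by
      simp only [Real.rpow_add_one_of_add_one_ne_zero hs]

-- Also valid when `b`, `A` or `B` vanishes, through `x / 0 = 0` and `0 ^ y = 0` for `y ≠ 0`.
lemma div_div_div_rpow_mul_div {a b A B α : ℝ} (ha : 0 ≤ a) (hb : 0 ≤ b) (hA : 0 ≤ A)
    (hB : 0 ≤ B) (hα₀ : α ≠ 0) (hα₁ : α ≠ 1) :
    ((a / A) / (b / B)) ^ α * (b / B) = B ^ (α - 1) / A ^ α * (a ^ α * b ^ (1 - α)) := by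
  rcases hb.eq_or_lt with rfl | hb
  · simp [Real.zero_rpow (sub_ne_zero.2 (Ne.symm hα₁))]
  rcases hB.eq_or_lt with rfl | hB
  · simp [Real.zero_rpow (sub_ne_zero.2 hα₁)]
  rcases hA.eq_or_lt with rfl | hA
  · simp [Real.zero_rpow hα₀]
  rw [Real.div_rpow (by positivity) (by positivity), Real.div_rpow ha hA.le,
    Real.div_rpow hb.le hB.le, Real.rpow_sub hB, Real.rpow_sub hb, Real.rpow_one, Real.rpow_one]
  field_simp

lemma rpow_sub_one_div_rpow_mul_self {A B α : ℝ} (hA : 0 ≤ A) (hB : 0 ≤ B) (hα : α ≠ 0) :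
    B ^ (α - 1) / A ^ α * B = (B / A) ^ α := by
  rw [Real.div_rpow hB hA, div_mul_eq_mul_div, ← Real.rpow_add_one_of_add_one_ne_zero (by simpa),
    sub_add_cancel]

theorem optimal_divergence_closed_form_general
    {d r : ℕ} (μ : Measure (Fin d → ℝ)) [IsProbabilityMeasure μ]
    (ℓ : (Fin d → ℝ) → ℝ) (φr : (Fin d → ℝ) → (Fin r → ℝ)) (hφ : Measurable φr)
    (hℓ_int : Integrable ℓ μ) (hℓ_pos : ∀ x, 0 < ℓ x)
    (α : ℝ) (hα : α ∈ Set.Ioo (0:ℝ) 1)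
    (Zπ : ℝ) (hZπ : Zπ = ∫ x, ℓ x ∂μ)
    (m : MeasurableSpace (Fin d → ℝ))
    (hm : m = MeasurableSpace.comap φr inferInstance)
    (Lopt : (Fin d → ℝ) → ℝ)
    (hLopt : Lopt = fun x => (condExp m μ (fun y => ℓ y ^ α) x) ^ (1/α))
    (hLopt_int : Integrable Lopt μ)
    (Zr : ℝ) (hZr : Zr = ∫ x, Lopt x ∂μ)
    (D : ((Fin d → ℝ) → ℝ) → ((Fin d → ℝ) → ℝ) → ℝ)
    (hD : D = fun p q => (1 / (α * (α - 1))) * ((∫ x, (p x / q x) ^ α * q x ∂μ) - 1)) :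
    D (fun x => ℓ x / Zπ) (fun x => Lopt x / Zr)
        = (1 / (α * (α - 1))) * ((Zr / Zπ) ^ α - 1) ∧
    0 ≤ Zr ∧ Zr ≤ Zπ := by
  obtain ⟨hα₀, hα₁⟩ := hα
  have hm_le : m ≤ MeasurableSpace.pi := hm ▸ hφ.comap_le
  have hℓ₀ : 0 ≤ᵐ[μ] ℓ := .of_forall fun x => (hℓ_pos x).le
  have hℓα_int : Integrable (fun x => ℓ x ^ α) μ :=
    hℓ_int.rpow_const_of_le_one hℓ₀ hα₀.le hα₁.le
  have hc₀ : 0 ≤ᵐ[μ] μ[fun y => ℓ y ^ α | m] :=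
    condExp_nonneg (.of_forall fun x => Real.rpow_nonneg (hℓ_pos x).le α)
  have hL₀ : 0 ≤ᵐ[μ] Lopt := by
    filter_upwards [hc₀] with x hx
    rw [hLopt]
    exact Real.rpow_nonneg hx _
  have hmix : ∫ x, ℓ x ^ α * Lopt x ^ (1 - α) ∂μ = Zr := by
    have hexp : (1 - α) / α + 1 = 1 / α := by field_simp; ring
    have hrw : (fun x => ℓ x ^ α * Lopt x ^ (1 - α)) =ᵐ[μ]
        fun x => μ[fun y => ℓ y ^ α | m] x ^ ((1 - α) / α) * ℓ x ^ α := by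
      filter_upwards [hc₀] with x hx
      rw [hLopt, ← Real.rpow_mul hx, one_div_mul_eq_div, mul_comm]
    have hint := integrable_rpow_mul_rpow_one_sub hℓ_int hLopt_int hℓ₀ hL₀ hα₀.le hα₁.le
    rw [integral_congr_ae hrw, integral_condExp_rpow_mul hm_le hℓα_int (by rw [hexp]; positivity)
      (hint.congr hrw), hexp, hZr, hLopt]
  have hZr₀ : 0 ≤ Zr := hZr ▸ integral_nonneg_of_ae hL₀
  have hZr_le : Zr ≤ Zπ := by
    have h := integral_rpow_mul_rpow_one_sub_le hℓ_int hLopt_int hℓ₀ hL₀ hα₀.le hα₁.le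
    rw [hmix, ← hZπ, ← hZr] at h
    nlinarith
  refine ⟨?_, hZr₀, hZr_le⟩
  have hdens : (fun x => ((ℓ x / Zπ) / (Lopt x / Zr)) ^ α * (Lopt x / Zr)) =ᵐ[μ]
      fun x => Zr ^ (α - 1) / Zπ ^ α * (ℓ x ^ α * Lopt x ^ (1 - α)) := by
    filter_upwards [hL₀] with x hx
    exact div_div_div_rpow_mul_div (hℓ_pos x).le hx (hZr₀.trans hZr_le) hZr₀ hα₀.ne' hα₁.ne
  subst hD
  dsimp only
  rw [integral_congr_ae hdens, integral_const_mul, hmix,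
    rpow_sub_one_div_rpow_mul_self (hZr₀.trans hZr_le) hZr₀ hα₀.ne']

/-- Closed form for the optimal divergence: for `α ∈ (0,1)`,
`D_α(π‖π_r^opt) = (1/(α(α−1)))((Z_r/Z_π)^α − 1)` and `0 ≤ Z_r ≤ Z_π`. -/
theorem optimal_divergence_closed_form
    {d r : ℕ} (μ : Measure (Fin d → ℝ)) [IsProbabilityMeasure μ]
    (ℓ : (Fin d → ℝ) → ℝ) (φr : (Fin d → ℝ) → (Fin r → ℝ)) (hφ : Measurable φr)
    (hℓ_int : Integrable ℓ μ) (hℓ_pos : ∀ x, 0 < ℓ x)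
    (α : ℝ) (hα : α ∈ Set.Ioo (0:ℝ) 1)
    (Zπ : ℝ) (hZπ : Zπ = ∫ x, ℓ x ∂μ) (hZπ_pos : 0 < Zπ)
    (m : MeasurableSpace (Fin d → ℝ))
    (hm : m = MeasurableSpace.comap φr inferInstance)
    (Lopt : (Fin d → ℝ) → ℝ)
    (hLopt : Lopt = fun x => (condExp m μ (fun y => ℓ y ^ α) x) ^ (1/α))
    (hLopt_int : Integrable Lopt μ)
    (Zr : ℝ) (hZr : Zr = ∫ x, Lopt x ∂μ)
    (D : ((Fin d → ℝ) → ℝ) → ((Fin d → ℝ) → ℝ) → ℝ)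
    (hD : D = fun p q => (1 / (α * (α - 1))) * ((∫ x, (p x / q x) ^ α * q x ∂μ) - 1))
    (hint : Integrable
      (fun x => ((ℓ x / Zπ) / (Lopt x / Zr)) ^ α * (Lopt x / Zr)) μ) :
    D (fun x => ℓ x / Zπ) (fun x => Lopt x / Zr)
        = (1 / (α * (α - 1))) * ((Zr / Zπ) ^ α - 1) ∧
    0 ≤ Zr ∧ Zr ≤ Zπ :=
  optimal_divergence_closed_form_general μ ℓ φr hφ hℓ_int hℓ_pos α hα Zπ hZπ m hm Lopt hLopt
    hLopt_int Zr hZr D hD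
end

section
/- Comparison of majorized loss functions for α ∈ [1/2, 1): with J_α(u) = (1/(α(α−1)))((1 − ((1−α)/2)u)_+^α − 1) and J_α^♭(u) = (1/(α(α−1)))((1 − (1−α)^2 u)_+^{α/(2(1−α))} − 1), one has J_α^♭(u) ≤ J_α(u) for every u ≥ 0. -/
/-!
Write `β = 1 - α ∈ (0, 1/2]`. Since `α(α - 1) < 0`, the claim is equivalent to
`(1 - β u / 2)₊ ^ α ≤ (1 - β² u)₊ ^ (α / (2β))`, and taking `α`-th roots it suffices that
`(1 - β u / 2)₊ ≤ (1 - β² u)₊ ^ (1 / (2β))`. Where `1 - β² u ≥ 0` this is Bernoulli's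
inequality with exponent `1 / (2β) ≥ 1`; where `1 - β² u < 0` we have `u > 1/β² ≥ 2/β`,
so the left side vanishes as well.
-/

theorem one_sub_half_mul_le_rpow_one_sub_sq_mul {β u : ℝ} (hβ₀ : 0 < β) (hβ : β ≤ 1 / 2)
    (h : 0 ≤ 1 - β ^ 2 * u) : 1 - β / 2 * u ≤ (1 - β ^ 2 * u) ^ (1 / (2 * β)) := by
  have hp : 1 ≤ 1 / (2 * β) := by rw [le_div_iff₀ (by positivity)]; linarith
  have bernoulli := one_add_mul_self_le_rpow_one_add (s := -(β ^ 2 * u)) (by linarith) hp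
  have hexp : 1 / (2 * β) * -(β ^ 2 * u) = -(β / 2 * u) := by field_simp
  rw [hexp, ← sub_eq_add_neg, ← sub_eq_add_neg] at bernoulli
  exact bernoulli

theorem max_one_sub_half_mul_le_rpow {β u : ℝ} (hβ₀ : 0 < β) (hβ : β ≤ 1 / 2) :
    max (1 - β / 2 * u) 0 ≤ (max (1 - β ^ 2 * u) 0) ^ (1 / (2 * β)) := by
  rcases le_or_gt (1 - β ^ 2 * u) 0 with hneg | hpos
  · have hsat : 1 - β / 2 * u ≤ 0 := by nlinarith
    rw [max_eq_right hsat]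
    exact Real.rpow_nonneg (le_max_right _ _) _
  · rw [max_eq_left hpos.le]
    exact max_le (one_sub_half_mul_le_rpow_one_sub_sq_mul hβ₀ hβ hpos.le)
      (Real.rpow_nonneg hpos.le _)

theorem max_one_sub_half_mul_rpow_le {β u a : ℝ} (hβ₀ : 0 < β) (hβ : β ≤ 1 / 2) (ha : 0 ≤ a) :
    (max (1 - β / 2 * u) 0) ^ a ≤ (max (1 - β ^ 2 * u) 0) ^ (a / (2 * β)) :=
  calc (max (1 - β / 2 * u) 0) ^ a
      ≤ ((max (1 - β ^ 2 * u) 0) ^ (1 / (2 * β))) ^ a :=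
        Real.rpow_le_rpow (le_max_right _ _) (max_one_sub_half_mul_le_rpow hβ₀ hβ) ha
    _ = (max (1 - β ^ 2 * u) 0) ^ (a / (2 * β)) := by
        rw [← Real.rpow_mul (le_max_right _ _)]
        ring_nf

theorem improved_loss_le_loss_general (α : ℝ) (hα : α ∈ Set.Ico (1/2 : ℝ) 1)
    (u : ℝ) :
    (1 / (α * (α - 1))) * ((max (1 - (1 - α) ^ 2 * u) 0) ^ (α / (2 * (1 - α))) - 1)
      ≤ (1 / (α * (α - 1))) * ((max (1 - (1 - α) / 2 * u) 0) ^ α - 1) := by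
  obtain ⟨hα₁, hα₂⟩ := hα
  have hcoef : 1 / (α * (α - 1)) ≤ 0 :=
    one_div_nonpos.mpr (mul_nonpos_of_nonneg_of_nonpos (by linarith) (by linarith))
  have key := max_one_sub_half_mul_rpow_le (β := 1 - α) (u := u) (by linarith) (by linarith)
    (by linarith : 0 ≤ α)
  exact mul_le_mul_of_nonpos_left (sub_le_sub_right key 1) hcoef

/-- For `α ∈ [1/2, 1)`, the improved majorized loss `J_α^♭` is dominated by the
majorized loss `J_α`. -/
theorem improved_loss_le_loss (α : ℝ) (hα : α ∈ Set.Ico (1/2 : ℝ) 1)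
    (u : ℝ) (hu : 0 ≤ u) :
    (1 / (α * (α - 1))) * ((max (1 - (1 - α) ^ 2 * u) 0) ^ (α / (2 * (1 - α))) - 1)
      ≤ (1 / (α * (α - 1))) * ((max (1 - (1 - α) / 2 * u) 0) ^ α - 1) :=
  improved_loss_le_loss_general α hα u
end

section
/- Reverse comparison for α ∈ (0, 1/2): with J_α(u) = (1/(α(α−1)))((1 − ((1−α)/(4α)) u)_+^α − 1) and J_α^♭(u) = (1/(α(α−1)))((1 − ((1−α)^2/(2α)) u)_+^{α/(2(1−α))} − 1), one has J_α(u) ≤ J_α^♭(u) for every u ≥ 0. -/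
/-! With `p = 1 / (2 (1 - α)) ∈ (0, 1]` the improved exponent is `α / (2 (1 - α)) = p α`, and the
two affine bases are related by `1 + p (B - 1) = A`. Bernoulli's inequality for the exponent `p`,
extended by zero to negative bases, gives `(B)₊ ^ p ≤ (A)₊`; raising to the power `α > 0` and
multiplying by the negative constant `1 / (α (α - 1))` reverses the inequality. -/

open Real

lemma max_zero_rpow_le_max_one_add_mul {p : ℝ} (hp0 : 0 ≤ p) (hp1 : p ≤ 1) (x : ℝ) :
    max x 0 ^ p ≤ max (1 + p * (x - 1)) 0 := by
  rcases le_or_gt x 0 with hx | hx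
  · rw [max_eq_right hx]
    rcases hp0.eq_or_lt with rfl | hp
    · simp
    · rw [zero_rpow hp.ne']
      exact le_max_right _ _
  · rw [max_eq_left hx.le]
    calc x ^ p = (1 + (x - 1)) ^ p := by ring_nf
      _ ≤ 1 + p * (x - 1) := rpow_one_add_le_one_add_mul_self (by linarith) hp0 hp1
      _ ≤ _ := le_max_left _ _

theorem loss_le_improved_loss_general (α : ℝ) (hα : α ∈ Set.Ioo (0:ℝ) (1/2))
    (u : ℝ) :
    (1 / (α * (α - 1))) * ((max (1 - (1 - α) / (4 * α) * u) 0) ^ α - 1)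
      ≤ (1 / (α * (α - 1))) *
          ((max (1 - (1 - α) ^ 2 / (2 * α) * u) 0) ^ (α / (2 * (1 - α))) - 1) := by
  obtain ⟨hα0, hα2⟩ := hα
  have hα1 : 0 < 1 - α := by linarith
  set p : ℝ := 1 / (2 * (1 - α)) with hp
  set B : ℝ := 1 - (1 - α) ^ 2 / (2 * α) * u with hB
  have hp0 : 0 ≤ p := by positivity
  have hp1 : p ≤ 1 := by rw [hp, div_le_one (by positivity)]; linarith
  have hbases : 1 + p * (B - 1) = 1 - (1 - α) / (4 * α) * u := by
    rw [hp, hB]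
    field_simp
    ring
  have hexp : α / (2 * (1 - α)) = p * α := by
    rw [hp]
    field_simp
  have hpow : max B 0 ^ (α / (2 * (1 - α))) ≤ max (1 - (1 - α) / (4 * α) * u) 0 ^ α := by
    rw [hexp, rpow_mul (le_max_right _ _), ← hbases]
    exact rpow_le_rpow (by positivity) (max_zero_rpow_le_max_one_add_mul hp0 hp1 B) hα0.le
  have hneg : 1 / (α * (α - 1)) ≤ 0 :=
    div_nonpos_of_nonneg_of_nonpos zero_le_one (mul_nonpos_of_nonneg_of_nonpos hα0.le (by linarith))
  exact mul_le_mul_of_nonpos_left (by linarith) hneg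

/-- For `α ∈ (0, 1/2)`, the majorized loss `J_α` is dominated by the improved
majorized loss `J_α^♭` (with the `α < 1/2` coefficients). -/
theorem loss_le_improved_loss (α : ℝ) (hα : α ∈ Set.Ioo (0:ℝ) (1/2))
    (u : ℝ) (hu : 0 ≤ u) :
    (1 / (α * (α - 1))) * ((max (1 - (1 - α) / (4 * α) * u) 0) ^ α - 1)
      ≤ (1 / (α * (α - 1))) *
          ((max (1 - (1 - α) ^ 2 / (2 * α) * u) 0) ^ (α / (2 * (1 - α))) - 1) :=
  loss_le_improved_loss_general α hα u
end

section
/- Concavity of the improved majorized loss for α ∈ [2/3, 1): the function J_α^♭(u) = (1/(α(α−1)))((1 − (1−α)^2 u)_+^{α/(2(1−α))} − 1) is concave on [0,∞). -/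
/-!
`u ↦ max (1 - (1 - α)² u) 0` is convex as the maximum of two affine functions, and since
`α ≥ 2/3` makes the exponent `α / (2(1 - α))` at least `1`, raising this nonnegative convex
function to that power keeps it convex. Subtracting `1` and multiplying by the negative constant
`1 / (α(α - 1))` then produces a concave function.
-/

open Set

theorem ConvexOn.rpow {E : Type*} [AddCommGroup E] [Module ℝ E] {s : Set E} {f : E → ℝ}
    (hf : ConvexOn ℝ s f) (hf₀ : ∀ x ∈ s, 0 ≤ f x) {p : ℝ} (hp : 1 ≤ p) :
    ConvexOn ℝ s fun x => f x ^ p := by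
  refine ⟨hf.1, fun x hx y hy a b ha hb hab => ?_⟩
  calc f (a • x + b • y) ^ p ≤ (a • f x + b • f y) ^ p :=
        Real.rpow_le_rpow (hf₀ _ (hf.1 hx hy ha hb hab)) (hf.2 hx hy ha hb hab) (by linarith)
    _ ≤ a • f x ^ p + b • f y ^ p := (convexOn_rpow hp).2 (hf₀ x hx) (hf₀ y hy) ha hb hab

theorem ConvexOn.concaveOn_const_mul_of_nonpos {E : Type*} [AddCommGroup E] [Module ℝ E]
    {s : Set E} {f : E → ℝ} (hf : ConvexOn ℝ s f) {c : ℝ} (hc : c ≤ 0) :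
    ConcaveOn ℝ s fun x => c * f x := by
  simpa only [smul_eq_mul, Pi.neg_apply, neg_mul_neg] using hf.neg.smul (neg_nonneg.2 hc)

theorem convexOn_max_one_sub_mul_zero (c : ℝ) :
    ConvexOn ℝ univ fun u : ℝ => max (1 - c * u) 0 :=
  ConvexOn.sup ⟨convex_univ, fun x _ y _ a b _ _ hab =>
    le_of_eq (by simp only [smul_eq_mul]; linear_combination (-1 : ℝ) * hab)⟩
    (convexOn_const 0 convex_univ)

/-- Concavity of the improved majorized loss `J_α^♭` on `[0,∞)` for `α ∈ [2/3, 1)`. -/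
theorem improved_loss_concave (α : ℝ) (hα : α ∈ Set.Ico (2/3 : ℝ) 1) :
    ConcaveOn ℝ (Set.Ici (0:ℝ))
      (fun u : ℝ =>
        (1 / (α * (α - 1))) * ((max (1 - (1 - α) ^ 2 * u) 0) ^ (α / (2 * (1 - α))) - 1)) := by
  obtain ⟨hα_ge, hα_lt⟩ := hα
  have hp : 1 ≤ α / (2 * (1 - α)) := by
    rw [le_div_iff₀ (by linarith)]
    linarith
  have hk : 1 / (α * (α - 1)) ≤ 0 :=
    one_div_nonpos.2 (mul_nonpos_of_nonneg_of_nonpos (by linarith) (by linarith))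
  have hG := ((convexOn_max_one_sub_mul_zero ((1 - α) ^ 2)).subset (subset_univ _)
    (convex_Ici 0)).rpow (fun _ _ => le_max_right _ _) hp
  simpa only [Pi.sub_apply] using
    (hG.sub (concaveOn_const 1 (convex_Ici 0))).concaveOn_const_mul_of_nonpos hk
end

section
/- Beckner monotonicity: for any probability measure μ on ℝ^d and any measurable g : ℝ^d → (0,∞) with g² integrable, the map β ↦ (1/(β−1)) ( ∫ g² dμ − (∫ g^{2/β} dμ)^β ) is non-increasing on (1, ∞). -/
/-!
By Hölder's inequality the moments `s ↦ ∫ g ^ s` are log-convex. Writing `2/β` as the convex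
combination `t (2/β') + (1 - t) 2` with `t = (β - 1) β' / ((β' - 1) β)` and raising to the power
`β` bounds `(∫ g ^ (2/β)) ^ β` by a weighted geometric mean of `(∫ g ^ (2/β')) ^ β'` and `∫ g ^ 2`
with weights `w = (β - 1)/(β' - 1)` and `1 - w`. Weighted AM-GM then gives
`∫ g ^ 2 - (∫ g ^ (2/β)) ^ β ≥ w (∫ g ^ 2 - (∫ g ^ (2/β')) ^ β')`, which is the monotonicity.
-/

open MeasureTheory

section Holder

variable {α : Type*} [MeasurableSpace α] {μ : Measure α}

lemma MeasureTheory.Integrable.memLp_rpow_of_nonneg {f : α → ℝ} (hf0 : ∀ x, 0 ≤ f x)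
    (hf : Integrable f μ) {t : ℝ} (ht : 0 < t) : MemLp (fun x => f x ^ t) (ENNReal.ofReal t⁻¹) μ := by
  have h := (memLp_norm_rpow_iff (q := ENNReal.ofReal t) hf.aestronglyMeasurable
    (by simpa using ht) ENNReal.ofReal_ne_top).2 (memLp_one_iff_integrable.2 hf)
  simp only [Real.norm_of_nonneg (hf0 _), ENNReal.toReal_ofReal ht.le] at h
  rwa [one_div, ← ENNReal.ofReal_inv_of_pos ht] at h

lemma integral_rpow_mul_rpow_le {f h : α → ℝ} (hf0 : ∀ x, 0 ≤ f x) (hh0 : ∀ x, 0 ≤ h x)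
    (hf : Integrable f μ) (hh : Integrable h μ) {t : ℝ} (ht0 : 0 < t) (ht1 : t < 1) :
    ∫ x, f x ^ t * h x ^ (1 - t) ∂μ ≤ (∫ x, f x ∂μ) ^ t * (∫ x, h x ∂μ) ^ (1 - t) := by
  have h1t : 0 < 1 - t := sub_pos.2 ht1
  have hconj : t⁻¹.HolderConjugate (1 - t)⁻¹ :=
    (Real.holderConjugate_iff).2 ⟨(one_lt_inv₀ ht0).2 ht1, by rw [inv_inv, inv_inv]; ring⟩
  have holder := integral_mul_le_Lp_mul_Lq_of_nonneg hconj
    (.of_forall fun x => Real.rpow_nonneg (hf0 x) t)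
    (.of_forall fun x => Real.rpow_nonneg (hh0 x) (1 - t))
    (hf.memLp_rpow_of_nonneg hf0 ht0) (hh.memLp_rpow_of_nonneg hh0 h1t)
  simpa only [← Real.rpow_mul (hf0 _), ← Real.rpow_mul (hh0 _), mul_inv_cancel₀ ht0.ne',
    mul_inv_cancel₀ h1t.ne', Real.rpow_one, one_div, inv_inv] using holder

lemma integral_rpow_convexComb_le {g : α → ℝ} (hg : ∀ x, 0 < g x) {p q t : ℝ}
    (hp : Integrable (fun x => g x ^ p) μ) (hq : Integrable (fun x => g x ^ q) μ)
    (ht0 : 0 < t) (ht1 : t < 1) :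
    ∫ x, g x ^ (t * p + (1 - t) * q) ∂μ ≤
      (∫ x, g x ^ p ∂μ) ^ t * (∫ x, g x ^ q ∂μ) ^ (1 - t) := by
  refine le_of_eq_of_le (integral_congr_ae (.of_forall fun x => ?_))
    (integral_rpow_mul_rpow_le (fun x => (Real.rpow_pos_of_pos (hg x) p).le)
      (fun x => (Real.rpow_pos_of_pos (hg x) q).le) hp hq ht0 ht1)
  simp only [Real.rpow_add (hg x), ← Real.rpow_mul (hg x).le, mul_comm]

end Holder

lemma one_div_mul_sub_rpow_le_of_le_rpow_mul_rpow {A B C β β' : ℝ}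
    (hA : 0 ≤ A) (hB : 0 ≤ B) (hC0 : 0 ≤ C) (hβ : 1 < β) (hββ' : β < β')
    (hC : C ≤ A ^ ((β - 1) * β' / ((β' - 1) * β)) * B ^ (1 - (β - 1) * β' / ((β' - 1) * β))) :
    1 / (β' - 1) * (B - A ^ β') ≤ 1 / (β - 1) * (B - C ^ β) := by
  have hβ1 : 0 < β - 1 := sub_pos.2 hβ
  have hβ'1 : 0 < β' - 1 := by linarith
  set w := (β - 1) / (β' - 1) with hw
  have hw0 : 0 ≤ w := by positivity
  have hw1 : 0 ≤ 1 - w := by rw [sub_nonneg, div_le_one hβ'1]; linarith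
  have hCβ : C ^ β ≤ (A ^ β') ^ w * B ^ (1 - w) := calc
    C ^ β ≤ (A ^ ((β - 1) * β' / ((β' - 1) * β)) * B ^ (1 - (β - 1) * β' / ((β' - 1) * β))) ^ β :=
      Real.rpow_le_rpow hC0 hC (by linarith)
    _ = (A ^ β') ^ w * B ^ (1 - w) := by
      have hexpA : (β - 1) * β' / ((β' - 1) * β) * β = β' * w := by rw [hw]; field_simp
      have hexpB : (1 - (β - 1) * β' / ((β' - 1) * β)) * β = 1 - w := by rw [hw]; field_simp; ring
      rw [Real.mul_rpow (by positivity) (by positivity), ← Real.rpow_mul hA, ← Real.rpow_mul hB,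
        ← Real.rpow_mul hA, hexpA, hexpB]
  have hamgm : (A ^ β') ^ w * B ^ (1 - w) ≤ w * A ^ β' + (1 - w) * B :=
    Real.geom_mean_le_arith_mean2_weighted hw0 hw1 (by positivity) hB (by ring)
  rw [div_mul_eq_mul_div, div_mul_eq_mul_div, div_le_div_iff₀ hβ'1 hβ1]
  have hwA : (β - 1) * A ^ β' = (β' - 1) * (w * A ^ β') := by rw [hw]; field_simp
  have hwB : (β - 1) * B = (β' - 1) * (w * B) := by rw [hw]; field_simp
  nlinarith [mul_le_mul_of_nonneg_left (hCβ.trans hamgm) hβ'1.le]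

theorem beckner_monotonicity_general
    {d : ℕ} (μ : Measure (Fin d → ℝ))
    (g : (Fin d → ℝ) → ℝ) (hg_pos : ∀ x, 0 < g x)
    (hg2 : Integrable (fun x => g x ^ (2:ℝ)) μ)
    (hgβ : ∀ β : ℝ, 1 < β → Integrable (fun x => g x ^ (2/β)) μ) :
    AntitoneOn
      (fun β : ℝ =>
        (1 / (β - 1)) * ((∫ x, g x ^ (2:ℝ) ∂μ) - (∫ x, g x ^ (2/β) ∂μ) ^ β))
      (Set.Ioi (1:ℝ)) := by
  intro β (hβ : 1 < β) β' (hβ' : 1 < β') hle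
  rcases hle.eq_or_lt with rfl | hlt
  · exact le_rfl
  set t := (β - 1) * β' / ((β' - 1) * β) with ht
  have hβ'1 : 0 < β' - 1 := by linarith
  have ht0 : 0 < t := by positivity
  have ht1 : t < 1 := by rw [div_lt_one (by positivity)]; nlinarith
  have hexp : t * (2 / β') + (1 - t) * 2 = 2 / β := by rw [ht]; field_simp; ring
  have hmoment := integral_rpow_convexComb_le hg_pos (hgβ β' hβ') hg2 ht0 ht1
  rw [hexp] at hmoment
  have hnonneg (s : ℝ) : 0 ≤ ∫ x, g x ^ s ∂μ :=
    integral_nonneg fun x => (Real.rpow_pos_of_pos (hg_pos x) s).le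
  exact one_div_mul_sub_rpow_le_of_le_rpow_mul_rpow (hnonneg _) (hnonneg _) (hnonneg _) hβ hlt
    hmoment

/-- Beckner monotonicity: for a probability measure `μ` on `ℝ^d` and positive `g`
with `g²` integrable, `β ↦ (1/(β−1)) (∫ g² dμ − (∫ g^{2/β} dμ)^β)` is
non-increasing on `(1, ∞)`. -/
theorem beckner_monotonicity
    {d : ℕ} (μ : Measure (Fin d → ℝ)) [IsProbabilityMeasure μ]
    (g : (Fin d → ℝ) → ℝ) (hg_meas : Measurable g) (hg_pos : ∀ x, 0 < g x)
    (hg2 : Integrable (fun x => g x ^ (2:ℝ)) μ)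
    (hgβ : ∀ β : ℝ, 1 < β → Integrable (fun x => g x ^ (2/β)) μ) :
    AntitoneOn
      (fun β : ℝ =>
        (1 / (β - 1)) * ((∫ x, g x ^ (2:ℝ) ∂μ) - (∫ x, g x ^ (2/β) ∂μ) ^ β))
      (Set.Ioi (1:ℝ)) :=
  beckner_monotonicity_general μ g hg_pos hg2 hgβ
end

section
/- Extension of Poincaré to β-Sobolev: let μ be a probability measure on ℝ^d satisfying the Poincaré inequality Var_μ(f) ≤ C ∫ ‖∇f‖² dμ for all smooth f. Then for every β ≥ 2 and every smooth positive f, (1/(β(β−1))) ( ∫ f^β dμ − (∫ f dμ)^β ) ≤ ((β/2)·C/2) ∫ f^β ‖∇ ln f‖² dμ. -/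
open MeasureTheory

section Aux

/-- The norm of the gradient equals the norm of the Fréchet derivative. -/
lemma norm_gradient_eq {F : Type*} [NormedAddCommGroup F] [InnerProductSpace ℝ F]
    [CompleteSpace F] (g : F → ℝ) (x : F) : ‖gradient g x‖ = ‖fderiv ℝ g x‖ := by
  unfold gradient
  exact LinearIsometryEquiv.norm_map _ _

/-- Pointwise computation: `‖∇(f^{β/2})‖² = (β/2)² f^β ‖∇ log f‖²`. -/
lemma grad_rpow_sq {F : Type*} [NormedAddCommGroup F] [InnerProductSpace ℝ F]
    [CompleteSpace F] {f : F → ℝ} (hf : Differentiable ℝ f) (hpos : ∀ x, 0 < f x)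
    {β : ℝ} (hβ : 0 ≤ β) (x : F) :
    ‖gradient (fun y => f y ^ (β / 2)) x‖ ^ 2
      = (β / 2) ^ 2 * (f x ^ β * ‖gradient (fun y => Real.log (f y)) x‖ ^ 2) := by
  have hd : HasFDerivAt f (fderiv ℝ f x) x := (hf x).hasFDerivAt
  have hne : f x ≠ 0 := (hpos x).ne'
  have hc : (0 : ℝ) < f x := hpos x
  have h1 : HasFDerivAt (fun y => Real.log (f y)) ((f x)⁻¹ • fderiv ℝ f x) x :=
    (Real.hasDerivAt_log hne).comp_hasFDerivAt x hd
  have h2 : HasFDerivAt (fun y => f y ^ (β / 2))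
      ((β / 2 * f x ^ (β / 2 - 1)) • fderiv ℝ f x) x :=
    (Real.hasDerivAt_rpow_const (Or.inl hne)).comp_hasFDerivAt x hd
  rw [norm_gradient_eq, norm_gradient_eq, h1.fderiv, h2.fderiv, norm_smul, norm_smul]
  have e1 : ‖β / 2 * f x ^ (β / 2 - 1)‖ = β / 2 * f x ^ (β / 2 - 1) := by
    rw [Real.norm_eq_abs, abs_of_nonneg]
    positivity
  have e2 : ‖(f x)⁻¹‖ = (f x)⁻¹ := by
    rw [Real.norm_eq_abs, abs_of_nonneg (by positivity)]
  rw [e1, e2]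
  have key : (f x ^ (β / 2 - 1)) ^ 2 = f x ^ β * ((f x)⁻¹) ^ 2 := by
    have k1 : (f x ^ (β / 2 - 1)) ^ 2 = f x ^ (β - 2) := by
      rw [← Real.rpow_natCast (f x ^ (β / 2 - 1)) 2, ← Real.rpow_mul hc.le]
      norm_num
      ring_nf
    have k2 : ((f x)⁻¹) ^ 2 = f x ^ (-2 : ℝ) := by
      rw [← Real.rpow_neg_one (f x), ← Real.rpow_natCast (f x ^ (-1 : ℝ)) 2,
        ← Real.rpow_mul hc.le]
      norm_num
    rw [k1, k2, ← Real.rpow_add hc]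
    ring_nf
  linear_combination ((β / 2) ^ 2 * ‖fderiv ℝ f x‖ ^ 2) * key

/-- The Beckner-type moment inequality:
`(β−1)(∫ f^{β/2})² ≤ (β−2)∫ f^β + (∫ f)^β`, for `β ≥ 2`, via Hölder + AM–GM. -/
lemma moment_ineq {α : Type*} [MeasurableSpace α] [TopologicalSpace α] [BorelSpace α]
    (μ : Measure α) [IsProbabilityMeasure μ]
    {f : α → ℝ} (hcont : Continuous f) (hpos : ∀ x, 0 < f x)
    {β : ℝ} (hβ : 2 ≤ β) (hf_int : Integrable f μ)
    (hfβ_int : Integrable (fun x => f x ^ β) μ) :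
    (β - 1) * (∫ x, f x ^ (β / 2) ∂μ) ^ 2
      ≤ (β - 2) * (∫ x, f x ^ β ∂μ) + (∫ x, f x ∂μ) ^ β := by
  rcases eq_or_lt_of_le hβ with h2 | h2
  · -- β = 2
    subst h2
    have e1 : (∫ x, f x ^ ((2 : ℝ) / 2) ∂μ) = ∫ x, f x ∂μ := by
      norm_num
    have e2 : (∫ x, f x ∂μ) ^ (2 : ℝ) = (∫ x, f x ∂μ) ^ 2 := by
      rw [show (2 : ℝ) = ((2 : ℕ) : ℝ) by norm_num, Real.rpow_natCast]
    rw [e1, e2]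
    ring_nf
    rfl
  · -- β > 2
    set A := ∫ x, f x ^ β ∂μ with hA
    set B := ∫ x, f x ∂μ with hB
    have hA0 : 0 ≤ A := integral_nonneg fun x => Real.rpow_nonneg (hpos x).le β
    have hB0 : 0 ≤ B := integral_nonneg fun x => (hpos x).le
    set lam : ℝ := (β - 2) / (2 * (β - 1)) with hlam
    have hb1 : (0 : ℝ) < β - 1 := by linarith
    have hlam_pos : 0 < lam := by
      apply div_pos (by linarith) (by linarith)
    have hlam_lt : lam < 1 := by
      rw [hlam, div_lt_one (by linarith)]
      linarith
    have hconj : Real.HolderConjugate (1 / lam) (1 / (1 - lam)) :=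
      Real.holderConjugate_one_div hlam_pos (by linarith) (by ring)
    -- the two factor functions
    set F : α → ℝ := fun x => f x ^ (lam * β) with hF
    set G : α → ℝ := fun x => f x ^ (1 - lam) with hG
    have hFc : Continuous F := hcont.rpow_const fun x => Or.inl (hpos x).ne'
    have hGc : Continuous G := hcont.rpow_const fun x => Or.inl (hpos x).ne'
    have hFpow : ∀ x, F x ^ (1 / lam) = f x ^ β := by
      intro x
      rw [hF, ← Real.rpow_mul (hpos x).le]
      congr 1
      field_simp
    have hGpow : ∀ x, G x ^ (1 / (1 - lam)) = f x := by
      intro x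
      rw [hG, ← Real.rpow_mul (hpos x).le]
      rw [mul_one_div, div_self (by linarith : (1:ℝ) - lam ≠ 0), Real.rpow_one]
    have hFmem : MemLp F (ENNReal.ofReal (1 / lam)) μ := by
      have hA' : ENNReal.ofReal (1 / lam) ≠ 0 := by
        rw [Ne, ENNReal.ofReal_eq_zero, not_le]
        positivity
      have hB' : ENNReal.ofReal (1 / lam) ≠ ⊤ := ENNReal.ofReal_ne_top
      rw [← memLp_norm_rpow_iff hFc.aestronglyMeasurable hA' hB',
        ENNReal.toReal_ofReal (by positivity), ENNReal.div_self hA' hB',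
        memLp_one_iff_integrable]
      apply hfβ_int.congr
      refine Filter.Eventually.of_forall fun x => ?_
      show f x ^ β = ‖F x‖ ^ (1 / lam)
      have hFnn : (0:ℝ) ≤ F x := Real.rpow_nonneg (hpos x).le _
      rw [Real.norm_of_nonneg hFnn, hFpow x]
    have hGmem : MemLp G (ENNReal.ofReal (1 / (1 - lam))) μ := by
      have hA' : ENNReal.ofReal (1 / (1 - lam)) ≠ 0 := by
        rw [Ne, ENNReal.ofReal_eq_zero, not_le]
        have : (0:ℝ) < 1 - lam := by linarith
        positivity
      have hB' : ENNReal.ofReal (1 / (1 - lam)) ≠ ⊤ := ENNReal.ofReal_ne_top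
      rw [← memLp_norm_rpow_iff hGc.aestronglyMeasurable hA' hB',
        ENNReal.toReal_ofReal (by
          have h1l : (0:ℝ) < 1 - lam := by linarith
          positivity), ENNReal.div_self hA' hB',
        memLp_one_iff_integrable]
      apply hf_int.congr
      refine Filter.Eventually.of_forall fun x => ?_
      show f x = ‖G x‖ ^ (1 / (1 - lam))
      have hGnn : (0:ℝ) ≤ G x := Real.rpow_nonneg (hpos x).le _
      rw [Real.norm_of_nonneg hGnn, hGpow x]
    have holder := MeasureTheory.integral_mul_le_Lp_mul_Lq_of_nonneg hconj
      (Filter.Eventually.of_forall fun x => Real.rpow_nonneg (hpos x).le _)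
      (Filter.Eventually.of_forall fun x => Real.rpow_nonneg (hpos x).le _)
      hFmem hGmem
    -- rewrite the three integrals in `holder`
    have hm : (∫ x, F x * G x ∂μ) = ∫ x, f x ^ (β / 2) ∂μ := by
      refine integral_congr_ae (Filter.Eventually.of_forall fun x => ?_)
      show F x * G x = f x ^ (β / 2)
      rw [show F x = f x ^ (lam * β) from rfl, show G x = f x ^ (1 - lam) from rfl,
        ← Real.rpow_add (hpos x)]
      congr 1
      rw [hlam]
      field_simp
      ring
    have hFi : (∫ x, F x ^ (1 / lam) ∂μ) = A := by
      refine integral_congr_ae (Filter.Eventually.of_forall fun x => ?_)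
      exact hFpow x
    have hGi : (∫ x, G x ^ (1 / (1 - lam)) ∂μ) = B := by
      refine integral_congr_ae (Filter.Eventually.of_forall fun x => ?_)
      exact hGpow x
    rw [hm, hFi, hGi, one_div_one_div, one_div_one_div] at holder
    -- so  ∫ f^{β/2} ≤ A^lam * B^(1-lam)
    have hm0 : 0 ≤ ∫ x, f x ^ (β / 2) ∂μ :=
      integral_nonneg fun x => Real.rpow_nonneg (hpos x).le _
    have hsq : (∫ x, f x ^ (β / 2) ∂μ) ^ 2 ≤ (A ^ lam * B ^ (1 - lam)) ^ 2 := by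
      exact pow_le_pow_left₀ hm0 holder 2
    have h21 : 2 * lam ≤ 1 := by
      have : lam ≤ 1 / 2 := by
        rw [hlam, div_le_div_iff₀ (by linarith) (by norm_num)]
        linarith
      linarith
    have hexp : (A ^ lam * B ^ (1 - lam)) ^ 2
        = A ^ (2 * lam) * (B ^ β) ^ (1 - 2 * lam) := by
      rw [mul_pow, ← Real.rpow_natCast (A ^ lam) 2, ← Real.rpow_natCast (B ^ (1 - lam)) 2,
        ← Real.rpow_mul hA0, ← Real.rpow_mul hB0, ← Real.rpow_mul hB0]
      congr 2
      · push_cast; ring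
      · push_cast
        rw [hlam]
        field_simp
        ring
    have hgm : A ^ (2 * lam) * (B ^ β) ^ (1 - 2 * lam)
        ≤ (2 * lam) * A + (1 - 2 * lam) * B ^ β := by
      apply Real.geom_mean_le_arith_mean2_weighted (by positivity)
        (by linarith) hA0 (Real.rpow_nonneg hB0 β) (by ring)
    have e1 : (β - 1) * (2 * lam) = β - 2 := by
      rw [hlam]; field_simp
    have e2 : (β - 1) * (1 - 2 * lam) = 1 := by
      rw [hlam]; field_simp; ring
    calc (β - 1) * (∫ x, f x ^ (β / 2) ∂μ) ^ 2
        ≤ (β - 1) * (A ^ (2 * lam) * (B ^ β) ^ (1 - 2 * lam)) := by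
          apply mul_le_mul_of_nonneg_left _ hb1.le
          rw [← hexp]; exact hsq
      _ ≤ (β - 1) * ((2 * lam) * A + (1 - 2 * lam) * B ^ β) := by
          exact mul_le_mul_of_nonneg_left hgm hb1.le
      _ = (β - 2) * A + B ^ β := by
          have : (β - 1) * ((2 * lam) * A + (1 - 2 * lam) * B ^ β)
              = ((β - 1) * (2 * lam)) * A + ((β - 1) * (1 - 2 * lam)) * B ^ β := by ring
          rw [this, e1, e2, one_mul]

end Aux

/-- Extension of the Poincaré inequality to β-Sobolev inequalities for `β ≥ 2`:
if `μ` satisfies `Var_μ(f) ≤ C ∫ ‖∇f‖² dμ` for all smooth `f`, then for every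
`β ≥ 2` and smooth positive `f`,
`(1/(β(β−1)))(∫ f^β dμ − (∫ f dμ)^β) ≤ ((β/2)·C/2) ∫ f^β ‖∇ ln f‖² dμ`. -/
theorem poincare_extends_to_beta_sobolev
    {d : ℕ} (μ : Measure (EuclideanSpace ℝ (Fin d))) [IsProbabilityMeasure μ]
    (C : ℝ) (hC : 0 ≤ C)
    (hPoincare : ∀ f : EuclideanSpace ℝ (Fin d) → ℝ, ContDiff ℝ (⊤ : ℕ∞) f →
      (∫ x, f x ^ 2 ∂μ) - (∫ x, f x ∂μ) ^ 2 ≤ C * ∫ x, ‖gradient f x‖ ^ 2 ∂μ)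
    (β : ℝ) (hβ : 2 ≤ β)
    (f : EuclideanSpace ℝ (Fin d) → ℝ) (hf : ContDiff ℝ (⊤ : ℕ∞) f)
    (hf_pos : ∀ x, 0 < f x)
    (hf_bdd : ∃ M : ℝ, ∀ x, f x ≤ M)
    (hf_int : Integrable f μ)
    (hfβ_int : Integrable (fun x => f x ^ β) μ)
    (hfgrad_int : Integrable
      (fun x => f x ^ β * ‖gradient (fun y => Real.log (f y)) x‖ ^ 2) μ) :
    (1 / (β * (β - 1))) * ((∫ x, f x ^ β ∂μ) - (∫ x, f x ∂μ) ^ β)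
      ≤ ((β / 2) * C / 2) *
        ∫ x, f x ^ β * ‖gradient (fun y => Real.log (f y)) x‖ ^ 2 ∂μ := by
  set A := ∫ x, f x ^ β ∂μ with hA
  set B := ∫ x, f x ∂μ with hB
  set I := ∫ x, f x ^ β * ‖gradient (fun y => Real.log (f y)) x‖ ^ 2 ∂μ with hI
  set m := ∫ x, f x ^ (β / 2) ∂μ with hm
  -- Poincaré applied to g = f^{β/2}
  have hg_smooth : ContDiff ℝ (⊤ : ℕ∞) fun x => f x ^ (β / 2) :=
    hf.rpow_const_of_ne fun x => (hf_pos x).ne'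
  have hP := hPoincare _ hg_smooth
  have hsq : (∫ x, (f x ^ (β / 2)) ^ 2 ∂μ) = A := by
    refine integral_congr_ae (Filter.Eventually.of_forall fun x => ?_)
    show (f x ^ (β / 2)) ^ 2 = f x ^ β
    rw [← Real.rpow_natCast (f x ^ (β / 2)) 2, ← Real.rpow_mul (hf_pos x).le]
    norm_num
  have hgrad : (∫ x, ‖gradient (fun y => f y ^ (β / 2)) x‖ ^ 2 ∂μ) = (β / 2) ^ 2 * I := by
    rw [hI, ← integral_const_mul]
    refine integral_congr_ae (Filter.Eventually.of_forall fun x => ?_)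
    exact grad_rpow_sq (hf.differentiable (by simp)) hf_pos (by linarith) x
  rw [hsq, hgrad] at hP
  -- hP : A - m ^ 2 ≤ C * ((β/2)^2 * I)
  -- Beckner-type moment inequality
  have hmom := moment_ineq μ hf.continuous hf_pos hβ hf_int hfβ_int
  rw [← hA, ← hB, ← hm] at hmom
  -- assemble
  have hb0 : (0 : ℝ) < β := by linarith
  have hb1 : (0 : ℝ) < β - 1 := by linarith
  have key : A - B ^ β ≤ (β - 1) * (C * ((β / 2) ^ 2 * I)) := by
    nlinarith [hP, hmom]
  calc (1 / (β * (β - 1))) * (A - B ^ β)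
      ≤ (1 / (β * (β - 1))) * ((β - 1) * (C * ((β / 2) ^ 2 * I))) := by
        apply mul_le_mul_of_nonneg_left key
        positivity
    _ = ((β / 2) * C / 2) * I := by
        field_simp
end
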